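/- arXiv:2112.15102 — 8 statements merged into one kernel-verified Lean document; each statement's English description precedes it below -/
import Mathlib

section
/- Let d ≥ 1, N ≥ 1 be integers, h > 0, p > 0, and X₀ ∈ ℝ^d. For each n ∈ {0,…,N−1} let P_n and Q_n be Markov kernels from ℝ^d to ℝ^d (the exact and the numerical one-step transition kernels). Let u : {0,…,N} × ℝ^d → ℝ be measurable, ν : ℝ^d → [0,∞) be Borel measurable, and Υ ≥ 0, and define the numerical laws μ₀ = δ_{X₀} (Dirac mass at X₀) and μ_{n+1} = μ_n.bind Q_n for n < N. Assume: (i) (Markov/flow property) for every n < N and every x ∈ ℝ^d, u(n+1,·) is integrable with respect to the measure P_n(x) and u(n,x) = ∫ u(n+1,y) P_n(x)(dy); (ii) (one-step weak error) for every n < N and every x ∈ ℝ^d, u(n+1,·) is integrable with respect to Q_n(x) and |∫ u(n+1,y) P_n(x)(dy) − ∫ u(n+1,y) Q_n(x)(dy)| ≤ ν(x) h^{p+1}; (iii) for every n < N, ν is μ_n-integrable with ∫ ν dμ_n ≤ Υ, and u(n+1,·) is integrable with respect to both μ_n.bind P_n and μ_{n+1}. Then |u(0, X₀) − ∫ u(N,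 y) μ_N(dy)| ≤ Υ · N · h^{p+1}. -/
/-! Write `aₙ = ∫ u(n) dμₙ`, so that `a₀ = u(0, X₀)`. By the flow property `aₙ` is the integral
of `u(n+1)` against `μₙ.bind Pₙ`, while `aₙ₊₁` is its integral against `μₙ.bind Qₙ`; integrating
the one-step error over `μₙ` gives `|aₙ - aₙ₊₁| ≤ Υ h^{p+1}`, and the `N` steps telescope. -/

open MeasureTheory ProbabilityTheory

namespace MeasureTheory.Measure

variable {α β E : Type*} {mα : MeasurableSpace α} {mβ : MeasurableSpace β}
  [NormedAddCommGroup E] [NormedSpace ℝ E] {μ : Measure α} {κ η : Kernel α β}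

theorem integral_bind_kernel {f : β → E} (hf : Integrable f (μ.bind κ)) :
    ∫ y, f y ∂(μ.bind κ) = ∫ x, ∫ y, f y ∂(κ x) ∂μ := by
  rw [comp_eq_comp_const_apply] at hf ⊢
  exact Kernel.integral_comp hf

theorem integrable_integral_kernel_of_integrable_bind {f : β → E}
    (hf : Integrable f (μ.bind κ)) :
    Integrable (fun x => ∫ y, f y ∂(κ x)) μ := by
  rw [comp_eq_comp_const_apply] at hf
  exact hf.integral_comp

theorem abs_integral_bind_sub_integral_bind_le {f : β → ℝ} (hκ : Integrable f (μ.bind κ))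
    (hη : Integrable f (μ.bind η)) :
    |∫ y, f y ∂(μ.bind κ) - ∫ y, f y ∂(μ.bind η)|
      ≤ ∫ x, |∫ y, f y ∂(κ x) - ∫ y, f y ∂(η x)| ∂μ := by
  rw [integral_bind_kernel hκ, integral_bind_kernel hη, ← integral_sub
    (integrable_integral_kernel_of_integrable_bind hκ)
    (integrable_integral_kernel_of_integrable_bind hη)]
  exact abs_integral_le_integral_abs

theorem abs_integral_sub_integral_bind_le_of_weak_error {f : β → ℝ} {g ν : α → ℝ} {c : ℝ}
    (hflow : ∀ x, g x = ∫ y, f y ∂(κ x)) (hκ : Integrable f (μ.bind κ))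
    (hη : Integrable f (μ.bind η)) (hν : Integrable ν μ)
    (herr : ∀ x, |∫ y, f y ∂(κ x) - ∫ y, f y ∂(η x)| ≤ ν x * c) :
    |∫ x, g x ∂μ - ∫ y, f y ∂(μ.bind η)| ≤ (∫ x, ν x ∂μ) * c := by
  have hg : ∫ x, g x ∂μ = ∫ y, f y ∂(μ.bind κ) := by
    rw [integral_bind_kernel hκ]
    exact integral_congr_ae (.of_forall hflow)
  calc |∫ x, g x ∂μ - ∫ y, f y ∂(μ.bind η)|
      ≤ ∫ x, |∫ y, f y ∂(κ x) - ∫ y, f y ∂(η x)| ∂μ := by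
        rw [hg]; exact abs_integral_bind_sub_integral_bind_le hκ hη
    _ ≤ ∫ x, ν x * c ∂μ :=
        integral_mono_of_nonneg (.of_forall fun _ => abs_nonneg _) (hν.mul_const c)
          (.of_forall herr)
    _ = (∫ x, ν x ∂μ) * c := integral_mul_const c ν

end MeasureTheory.Measure

theorem general_weak_convergence_theorem_general
    (d N : ℕ) (h p : ℝ) (hh : 0 < h)
    (X₀ : EuclideanSpace ℝ (Fin d))
    (P Q : ℕ → Kernel (EuclideanSpace ℝ (Fin d)) (EuclideanSpace ℝ (Fin d)))
    (u : ℕ → EuclideanSpace ℝ (Fin d) → ℝ)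
    (ν : EuclideanSpace ℝ (Fin d) → ℝ)
    (Υ : ℝ)
    (μ : ℕ → Measure (EuclideanSpace ℝ (Fin d)))
    (hμ0 : μ 0 = Measure.dirac X₀)
    (hμs : ∀ n < N, μ (n + 1) = (μ n).bind (fun x => Q n x))
    -- (i) Markov/flow property
    (hflow : ∀ n < N, ∀ x, u n x = ∫ y, u (n + 1) y ∂(P n x))
    -- (ii) one-step weak error
    (hloc : ∀ n < N, ∀ x,
      |(∫ y, u (n + 1) y ∂(P n x)) - ∫ y, u (n + 1) y ∂(Q n x)| ≤ ν x * h ^ (p + 1))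
    -- (iii) integrability along the numerical laws
    (hν_int : ∀ n < N, Integrable ν (μ n))
    (hν_bound : ∀ n < N, (∫ x, ν x ∂(μ n)) ≤ Υ)
    (hint_P : ∀ n < N, Integrable (u (n + 1)) ((μ n).bind (fun x => P n x)))
    (hint : ∀ n < N, Integrable (u (n + 1)) (μ (n + 1))) :
    |u 0 X₀ - ∫ y, u N y ∂(μ N)| ≤ Υ * N * h ^ (p + 1) := by
  have hstep : ∀ {n}, n < N →
      dist (∫ y, u n y ∂(μ n)) (∫ y, u (n + 1) y ∂(μ (n + 1))) ≤ Υ * h ^ (p + 1) := by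
    intro n hn
    rw [Real.dist_eq, hμs n hn]
    calc _ ≤ (∫ x, ν x ∂(μ n)) * h ^ (p + 1) :=
          Measure.abs_integral_sub_integral_bind_le_of_weak_error (hflow n hn) (hint_P n hn)
            (hμs n hn ▸ hint n hn) (hν_int n hn) (hloc n hn)
      _ ≤ Υ * h ^ (p + 1) :=
          mul_le_mul_of_nonneg_right (hν_bound n hn) (Real.rpow_pos_of_pos hh _).le
  have htelescope := dist_le_range_sum_of_dist_le N hstep
  rw [Real.dist_eq, hμ0, integral_dirac, Finset.sum_const, Finset.card_range,
    nsmul_eq_mul] at htelescope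
  linarith

/-- The general weak convergence theorem for one-step approximations,
in abstract Markov-kernel form. -/
theorem general_weak_convergence_theorem
    (d N : ℕ) (hd : 1 ≤ d) (hN : 1 ≤ N) (h p : ℝ) (hh : 0 < h) (hp : 0 < p)
    (X₀ : EuclideanSpace ℝ (Fin d))
    (P Q : ℕ → Kernel (EuclideanSpace ℝ (Fin d)) (EuclideanSpace ℝ (Fin d)))
    (hP : ∀ n, IsMarkovKernel (P n)) (hQ : ∀ n, IsMarkovKernel (Q n))
    (u : ℕ → EuclideanSpace ℝ (Fin d) → ℝ) (hu : ∀ n, Measurable (u n))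
    (ν : EuclideanSpace ℝ (Fin d) → ℝ) (hνmeas : Measurable ν) (hν0 : ∀ x, 0 ≤ ν x)
    (Υ : ℝ) (hΥ : 0 ≤ Υ)
    (μ : ℕ → Measure (EuclideanSpace ℝ (Fin d)))
    (hμ0 : μ 0 = Measure.dirac X₀)
    (hμs : ∀ n < N, μ (n + 1) = (μ n).bind (fun x => Q n x))
    -- (i) Markov/flow property
    (hflow_int : ∀ n < N, ∀ x, Integrable (u (n + 1)) (P n x))
    (hflow : ∀ n < N, ∀ x, u n x = ∫ y, u (n + 1) y ∂(P n x))
    -- (ii) one-step weak error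
    (hloc_int : ∀ n < N, ∀ x, Integrable (u (n + 1)) (Q n x))
    (hloc : ∀ n < N, ∀ x,
      |(∫ y, u (n + 1) y ∂(P n x)) - ∫ y, u (n + 1) y ∂(Q n x)| ≤ ν x * h ^ (p + 1))
    -- (iii) integrability along the numerical laws
    (hν_int : ∀ n < N, Integrable ν (μ n))
    (hν_bound : ∀ n < N, (∫ x, ν x ∂(μ n)) ≤ Υ)
    (hint_P : ∀ n < N, Integrable (u (n + 1)) ((μ n).bind (fun x => P n x)))
    (hint : ∀ n < N, Integrable (u (n + 1)) (μ (n + 1))) :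
    |u 0 X₀ - ∫ y, u N y ∂(μ N)| ≤ Υ * N * h ^ (p + 1) :=
  general_weak_convergence_theorem_general d N h p hh X₀ P Q u ν Υ μ hμ0 hμs hflow hloc hν_int
    hν_bound hint_P hint
end

section
/- Let d, m ≥ 1, let f : ℝ^d → ℝ^d and g : ℝ^d → ℝ^{d×m} be continuously differentiable, and let λ₀ > 0 and C ∈ ℝ be such that ⟨Df(x)y, y⟩ + λ₀ ‖Dg(x)y‖² ≤ C|y|² for all x, y ∈ ℝ^d, where Df(x) is the Jacobian matrix of f at x and Dg(x)y ∈ ℝ^{d×m} denotes the directional derivative of g at x in the direction y. Then for all x, y ∈ ℝ^d, ⟨x−y, f(x)−f(y)⟩ + λ₀ ‖g(x)−g(y)‖² ≤ C|x−y|². -/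
open scoped RealInnerProductSpace
open MeasureTheory

/-!
Along the segment `t ↦ y + t • v`, `v = x - y`, the fundamental theorem of calculus writes
`⟪v, f x - f y⟫` as `∫₀¹ ⟪Df v, v⟫` and `g x - g y` as `∫₀¹ Dg v`. Jensen's inequality for the
convex function `‖·‖²` gives `‖g x - g y‖² ≤ ∫₀¹ ‖Dg v‖²`, so, as `λ ≥ 0`, the left-hand side is
at most the integral of the infinitesimal quantity, which is bounded by `C ‖v‖²` pointwise.
-/

section

variable {E F : Type*} [NormedAddCommGroup E] [NormedSpace ℝ E]
  [NormedAddCommGroup F] [NormedSpace ℝ F]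

theorem norm_intervalIntegral_sq_le_integral_norm_sq [CompleteSpace F] {u : ℝ → F}
    (hu : ContinuousOn u (Set.Icc 0 1)) :
    ‖∫ t in (0 : ℝ)..1, u t‖ ^ 2 ≤ ∫ t in (0 : ℝ)..1, ‖u t‖ ^ 2 := by
  have : IsProbabilityMeasure (volume.restrict (Set.Ioc (0 : ℝ) 1)) := ⟨by simp⟩
  have hu_int : IntegrableOn u (Set.Ioc 0 1) :=
    hu.integrableOn_Icc.mono_set Set.Ioc_subset_Icc_self
  have hu_sq_int : IntegrableOn (fun t => ‖u t‖ ^ 2) (Set.Ioc 0 1) :=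
    (hu.norm.pow 2).integrableOn_Icc.mono_set Set.Ioc_subset_Icc_self
  simp only [intervalIntegral.integral_of_le zero_le_one]
  exact ((convexOn_norm convex_univ).pow (fun _ _ => norm_nonneg _) 2).map_integral_le
    (continuous_norm.pow 2).continuousOn isClosed_univ (by simp) hu_int hu_sq_int

theorem DifferentiableAt.hasDerivAt_comp_add_smul {f : E → F} {y v : E} {t : ℝ}
    (hf : DifferentiableAt ℝ f (y + t • v)) :
    HasDerivAt (fun s : ℝ => f (y + s • v)) (fderiv ℝ f (y + t • v) v) t := by
  have hline : HasDerivAt (fun s : ℝ => y + s • v) v t := by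
    simpa using ((hasDerivAt_id t).smul_const v).const_add y
  exact hf.hasFDerivAt.comp_hasDerivAt t hline

theorem ContDiff.continuous_fderiv_comp_add_smul_apply {f : E → F} (hf : ContDiff ℝ 1 f)
    (y v : E) : Continuous fun t : ℝ => fderiv ℝ f (y + t • v) v :=
  ((hf.continuous_fderiv one_ne_zero).comp (by fun_prop)).clm_apply continuous_const

theorem ContDiff.sub_eq_intervalIntegral_fderiv [CompleteSpace F] {f : E → F}
    (hf : ContDiff ℝ 1 f) (y v : E) :
    f (y + v) - f y = ∫ t in (0 : ℝ)..1, fderiv ℝ f (y + t • v) v := by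
  rw [intervalIntegral.integral_eq_sub_of_hasDerivAt
    (fun t _ => (hf.differentiable one_ne_zero _).hasDerivAt_comp_add_smul)
    ((hf.continuous_fderiv_comp_add_smul_apply y v).intervalIntegrable 0 1)]
  simp

end

theorem one_sided_lipschitz_of_derivative_monotonicity_general
    (d m : ℕ)
    (f : EuclideanSpace ℝ (Fin d) → EuclideanSpace ℝ (Fin d))
    (g : EuclideanSpace ℝ (Fin d) → EuclideanSpace ℝ (Fin d × Fin m))
    (hf : ContDiff ℝ 1 f) (hg : ContDiff ℝ 1 g)
    (lam C : ℝ) (hlam : 0 < lam)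
    (hmono : ∀ x y : EuclideanSpace ℝ (Fin d),
      ⟪fderiv ℝ f x y, y⟫ + lam * ‖fderiv ℝ g x y‖ ^ 2 ≤ C * ‖y‖ ^ 2) :
    ∀ x y : EuclideanSpace ℝ (Fin d),
      ⟪x - y, f x - f y⟫ + lam * ‖g x - g y‖ ^ 2 ≤ C * ‖x - y‖ ^ 2 := by
  intro x y
  obtain ⟨v, rfl⟩ : ∃ v, x = y + v := ⟨x - y, by abel⟩
  rw [add_sub_cancel_left]
  have hDf := hf.continuous_fderiv_comp_add_smul_apply y v
  have hDg : Continuous fun t : ℝ => ‖fderiv ℝ g (y + t • v) v‖ ^ 2 :=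
    (hg.continuous_fderiv_comp_add_smul_apply y v).norm.pow 2
  have hf_int : ⟪v, f (y + v) - f y⟫ = ∫ t in (0 : ℝ)..1, ⟪fderiv ℝ f (y + t • v) v, v⟫ := by
    rw [hf.sub_eq_intervalIntegral_fderiv y v]
    simpa [real_inner_comm v] using
      ((innerSL ℝ v).intervalIntegral_comp_comm (hDf.intervalIntegrable 0 1)).symm
  have hg_int : ‖g (y + v) - g y‖ ^ 2 ≤ ∫ t in (0 : ℝ)..1, ‖fderiv ℝ g (y + t • v) v‖ ^ 2 := by
    rw [hg.sub_eq_intervalIntegral_fderiv y v]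
    exact norm_intervalIntegral_sq_le_integral_norm_sq
      (hg.continuous_fderiv_comp_add_smul_apply y v).continuousOn
  calc ⟪v, f (y + v) - f y⟫ + lam * ‖g (y + v) - g y‖ ^ 2
      ≤ ∫ t in (0 : ℝ)..1,
          ⟪fderiv ℝ f (y + t • v) v, v⟫ + lam * ‖fderiv ℝ g (y + t • v) v‖ ^ 2 := by
        rw [intervalIntegral.integral_add ((hDf.inner continuous_const).intervalIntegrable 0 1)
          ((hDg.const_mul lam).intervalIntegrable 0 1), intervalIntegral.integral_const_mul,
          hf_int]
        gcongr
    _ ≤ ∫ _ in (0 : ℝ)..1, C * ‖v‖ ^ 2 :=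
        intervalIntegral.integral_mono_on zero_le_one
          (((hDf.inner continuous_const).add (hDg.const_mul lam)).intervalIntegrable 0 1)
          intervalIntegrable_const fun t _ => hmono (y + t • v) v
    _ = C * ‖v‖ ^ 2 := by simp

/-- The infinitesimal monotonicity condition (A3) on the derivatives of the drift `f`
and the diffusion `g` implies the global one-sided Lipschitz/monotonicity condition.
Here `ℝ^{d×m}` is modelled as `EuclideanSpace ℝ (Fin d × Fin m)`, whose norm is the
Frobenius norm. -/
theorem one_sided_lipschitz_of_derivative_monotonicity
    (d m : ℕ) (hd : 1 ≤ d) (hm : 1 ≤ m)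
    (f : EuclideanSpace ℝ (Fin d) → EuclideanSpace ℝ (Fin d))
    (g : EuclideanSpace ℝ (Fin d) → EuclideanSpace ℝ (Fin d × Fin m))
    (hf : ContDiff ℝ 1 f) (hg : ContDiff ℝ 1 g)
    (lam C : ℝ) (hlam : 0 < lam)
    (hmono : ∀ x y : EuclideanSpace ℝ (Fin d),
      ⟪fderiv ℝ f x y, y⟫ + lam * ‖fderiv ℝ g x y‖ ^ 2 ≤ C * ‖y‖ ^ 2) :
    ∀ x y : EuclideanSpace ℝ (Fin d),
      ⟪x - y, f x - f y⟫ + lam * ‖g x - g y‖ ^ 2 ≤ C * ‖x - y‖ ^ 2 :=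
  one_sided_lipschitz_of_derivative_monotonicity_general d m f g hf hg lam C hlam hmono
end

section
/- Let d, m ≥ 1, L > 0, r ≥ 0, 0 ≤ ρ ≤ r, and suppose f : ℝ^d → ℝ^d satisfies |f(x)| ≤ L(1+|x|^{2r+1}) and g : ℝ^d → ℝ^{d×m} satisfies ‖g(x)‖ ≤ L(1+|x|^ρ) for all x ∈ ℝ^d. Let 0 < α₁, α₂ ≤ 1/2 and set α = min(α₁,α₂). Then there exists a constant C depending only on L, r and ρ such that for all h ∈ (0,1] and all x ∈ ℝ^d, the fully tamed Euler (FTE1) coefficients satisfy |f̄_h(x) − f(x)| ≤ C h^{α}(1+|x|^{4r+2}) and ‖ḡ_h(x) − g(x)‖ ≤ C h^{α}(1+|x|^{2r+ρ+1}). -/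
/-!
Writing `D = 1 + a` with `a = h^α₁ |f x| + h^α₂ ‖g x‖²`, the tamed coefficient differs from the
original one by the factor `1 - D⁻¹ = a / (1 + a) ≤ a`, and `a ≤ h^α (|f x| + ‖g x‖²)` because
`h ≤ 1`. The growth bounds give `|f x| + ‖g x‖² = O(1 + |x|^(2r+1))` (this uses `2ρ ≤ 2r + 1`),
and multiplying by `|f x| = O(1 + |x|^(2r+1))`, resp. `‖g x‖ = O(1 + |x|^ρ)`, gives the weights.
-/

namespace Real

lemma rpow_le_one_add_rpow {X a b : ℝ} (hX : 0 ≤ X) (ha : 0 ≤ a) (hab : a ≤ b) :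
    X ^ a ≤ 1 + X ^ b := by
  rcases le_total X 1 with hX1 | hX1
  · linarith [rpow_le_one hX hX1 ha, rpow_nonneg hX b]
  · linarith [rpow_le_rpow_of_exponent_le hX1 hab]

lemma one_add_rpow_mul_one_add_rpow_le {X a b : ℝ} (hX : 0 ≤ X) (ha : 0 ≤ a) (hb : 0 ≤ b) :
    (1 + X ^ a) * (1 + X ^ b) ≤ 3 * (1 + X ^ (a + b)) := by
  have hXa := rpow_le_one_add_rpow hX ha (le_add_of_nonneg_right hb)
  have hXb := rpow_le_one_add_rpow hX hb (le_add_of_nonneg_left ha)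
  have hmul : X ^ a * X ^ b = X ^ (a + b) := (rpow_add_of_nonneg hX ha hb).symm
  linarith [show (1 + X ^ a) * (1 + X ^ b) = 1 + X ^ a + X ^ b + X ^ a * X ^ b by ring]

lemma one_add_rpow_sq_le {X p q : ℝ} (hX : 0 ≤ X) (hq : 0 ≤ q) (hqp : 2 * q ≤ p) :
    (1 + X ^ q) ^ 2 ≤ 6 * (1 + X ^ p) := by
  have hprod := one_add_rpow_mul_one_add_rpow_le hX hq hq
  have hle := rpow_le_one_add_rpow hX (add_nonneg hq hq) (by linarith : q + q ≤ p)
  nlinarith [rpow_nonneg hX p]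

lemma rpow_mul_add_rpow_mul_le_rpow_min {h α₁ α₂ u w : ℝ} (hh : 0 < h) (hh1 : h ≤ 1)
    (hu : 0 ≤ u) (hw : 0 ≤ w) :
    h ^ α₁ * u + h ^ α₂ * w ≤ h ^ min α₁ α₂ * (u + w) := by
  have h₁ := rpow_le_rpow_of_exponent_ge hh hh1 (min_le_left α₁ α₂)
  have h₂ := rpow_le_rpow_of_exponent_ge hh hh1 (min_le_right α₁ α₂)
  rw [mul_add]
  gcongr

end Real

open Real

lemma add_sq_le_of_le_one_add_rpow {L X F G p q : ℝ} (hX : 0 ≤ X) (hq : 0 ≤ q)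
    (hqp : 2 * q ≤ p) (hF : F ≤ L * (1 + X ^ p)) (hG0 : 0 ≤ G) (hG : G ≤ L * (1 + X ^ q)) :
    F + G ^ 2 ≤ (L + 6 * L ^ 2) * (1 + X ^ p) := by
  have hsq : G ^ 2 ≤ L ^ 2 * (1 + X ^ q) ^ 2 := by
    rw [← mul_pow]
    exact pow_le_pow_left₀ hG0 hG 2
  have hsq6 := mul_le_mul_of_nonneg_left (one_add_rpow_sq_le hX hq hqp) (sq_nonneg L)
  linarith

lemma norm_inv_one_add_smul_sub_le {E : Type*} [NormedAddCommGroup E] [NormedSpace ℝ E]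
    {a : ℝ} (ha : 0 ≤ a) (v : E) : ‖(1 + a)⁻¹ • v - v‖ ≤ a * ‖v‖ := by
  have hpos : 0 < 1 + a := by linarith
  have hfactor : |(1 + a)⁻¹ - 1| ≤ a := by
    rw [abs_le, inv_eq_one_div, div_sub_one hpos.ne', le_div_iff₀ hpos, div_le_iff₀ hpos]
    constructor <;> nlinarith
  calc ‖(1 + a)⁻¹ • v - v‖ = |(1 + a)⁻¹ - 1| * ‖v‖ := by
        rw [← norm_eq_abs, ← norm_smul, sub_smul, one_smul]
    _ ≤ a * ‖v‖ := by gcongr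

lemma norm_inv_one_add_smul_sub_le_mul_one_add_rpow {E : Type*} [NormedAddCommGroup E]
    [NormedSpace ℝ E] {a ε K L X p q : ℝ} (v : E) (ha : 0 ≤ a) (hε : 0 ≤ ε) (hK : 0 ≤ K)
    (hL : 0 ≤ L) (hX : 0 ≤ X) (hp : 0 ≤ p) (hq : 0 ≤ q) (haε : a ≤ ε * (K * (1 + X ^ p)))
    (hv : ‖v‖ ≤ L * (1 + X ^ q)) :
    ‖(1 + a)⁻¹ • v - v‖ ≤ 3 * L * K * ε * (1 + X ^ (p + q)) := by
  calc ‖(1 + a)⁻¹ • v - v‖ ≤ a * ‖v‖ := norm_inv_one_add_smul_sub_le ha v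
    _ ≤ ε * (K * (1 + X ^ p)) * (L * (1 + X ^ q)) := by gcongr
    _ = ε * K * L * ((1 + X ^ p) * (1 + X ^ q)) := by ring
    _ ≤ ε * K * L * (3 * (1 + X ^ (p + q))) :=
        mul_le_mul_of_nonneg_left (one_add_rpow_mul_one_add_rpow_le hX hp hq) (by positivity)
    _ = 3 * L * K * ε * (1 + X ^ (p + q)) := by ring

/-- `ℝ^{d×m}` is modelled as `EuclideanSpace ℝ (Fin d × Fin m)`, whose norm is the Frobenius
norm. -/
theorem fte1_modification_error
    (L r ρ : ℝ) (hL : 0 < L) (hr : 0 ≤ r) (hρ0 : 0 ≤ ρ) (hρr : ρ ≤ r) :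
    ∃ C : ℝ, 0 < C ∧ ∀ (d m : ℕ), 1 ≤ d → 1 ≤ m →
      ∀ (f : EuclideanSpace ℝ (Fin d) → EuclideanSpace ℝ (Fin d))
        (g : EuclideanSpace ℝ (Fin d) → EuclideanSpace ℝ (Fin d × Fin m)),
      (∀ x, ‖f x‖ ≤ L * (1 + ‖x‖ ^ (2 * r + 1))) →
      (∀ x, ‖g x‖ ≤ L * (1 + ‖x‖ ^ ρ)) →
      ∀ (α₁ α₂ : ℝ), 0 < α₁ → α₁ ≤ 1 / 2 → 0 < α₂ → α₂ ≤ 1 / 2 →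
      ∀ h : ℝ, 0 < h → h ≤ 1 → ∀ x : EuclideanSpace ℝ (Fin d),
        ‖(1 + h ^ α₁ * ‖f x‖ + h ^ α₂ * ‖g x‖ ^ 2)⁻¹ • f x - f x‖
            ≤ C * h ^ (min α₁ α₂) * (1 + ‖x‖ ^ (4 * r + 2)) ∧
        ‖(1 + h ^ α₁ * ‖f x‖ + h ^ α₂ * ‖g x‖ ^ 2)⁻¹ • g x - g x‖
            ≤ C * h ^ (min α₁ α₂) * (1 + ‖x‖ ^ (2 * r + ρ + 1)) := by
  refine ⟨3 * L * (L + 6 * L ^ 2), by positivity, ?_⟩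
  intro d m _ _ f g hf hg α₁ α₂ _ _ _ _ h hh hh1 x
  have hp : 0 ≤ 2 * r + 1 := by linarith
  have ha : 0 ≤ h ^ α₁ * ‖f x‖ + h ^ α₂ * ‖g x‖ ^ 2 := by positivity
  have hrate := rpow_mul_add_rpow_mul_le_rpow_min (α₁ := α₁) (α₂ := α₂) hh hh1
    (norm_nonneg (f x)) (sq_nonneg ‖g x‖)
  have hgrowth := add_sq_le_of_le_one_add_rpow (norm_nonneg x) hρ0 (by linarith) (hf x)
    (norm_nonneg (g x)) (hg x)
  have haε := hrate.trans (mul_le_mul_of_nonneg_left hgrowth (by positivity))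
  rw [add_assoc]
  constructor
  · have := norm_inv_one_add_smul_sub_le_mul_one_add_rpow (f x) ha (by positivity)
      (by positivity) hL.le (norm_nonneg x) hp hp haε (hf x)
    rwa [show 2 * r + 1 + (2 * r + 1) = 4 * r + 2 by ring] at this
  · have := norm_inv_one_add_smul_sub_le_mul_one_add_rpow (g x) ha (by positivity)
      (by positivity) hL.le (norm_nonneg x) hp hρ0 haε (hg x)
    rwa [show 2 * r + 1 + ρ = 2 * r + ρ + 1 by ring] at this
end

section
/- Let d, m ≥ 1, L > 0, r ≥ 0, 0 ≤ ρ ≤ r, 0 < ϑ ≤ 1/2, and suppose f : ℝ^d → ℝ^d satisfies |f(x)| ≤ L(1+|x|^{2r+1}) and g : ℝ^d → ℝ^{d×m} satisfies ‖g(x)‖ ≤ L(1+|x|^ρ) for all x ∈ ℝ^d. Then there exists a constant C depending only on L, r and ρ such that for all h ∈ (0,1] and all x ∈ ℝ^d, the fully tamed Euler (FTE2) coefficients satisfy (i) |f̄_h(x)| ≤ min( C h^{−ϑ}(1+|x|), |f(x)| ) and (ii) ‖ḡ_h(x)‖² ≤ min( C h^{−ϑ}(1+|x|²), ‖g(x)‖²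 ); moreover, (iii) if there exist μ > 0 and C₀ ≥ 0 with ⟨x, f(x)⟩ + μ‖g(x)‖² ≤ C₀(1+|x|²) for all x, then ⟨x, f̄_h(x)⟩ + μ‖ḡ_h(x)‖² ≤ C₀(1+|x|²) for all x and all h > 0. -/
/-!
Write `D = 1 + E P` with `E = h^ϑ ∈ (0, 1]` and `P = |x|^{2r}`. The growth bounds give
`|f(x)| ≤ L (1 + P |x|)` and `‖g(x)‖² ≤ 4 L² (1 + P |x|²)`, and the elementary inequality
`1 + P y ≤ (1 + P)(1 + y) ≤ E⁻¹ (1 + E P)(1 + y)` trades the superlinear factor `P` for the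
denominator `D` at the price of `E⁻¹ = h^{-ϑ}`. Since `D ≥ 1`, dividing by `D` never increases
a norm, and it multiplies the one-sided quantity `⟨x, f⟩ + μ ‖g‖²` by at most `D⁻¹ ≤ 1`.
-/

open scoped RealInnerProductSpace

lemma one_add_mul_le_inv_mul_one_add_mul {E P y : ℝ} (hE : 0 < E) (hE1 : E ≤ 1) (hP : 0 ≤ P)
    (hy : 0 ≤ y) : 1 + P * y ≤ (1 + E * P) * (E⁻¹ * (1 + y)) := by
  have hEinv : 1 ≤ E⁻¹ := one_le_inv₀ hE |>.mpr hE1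
  have hfactor : (1 + E * P) * (E⁻¹ * (1 + y)) = (E⁻¹ + P) * (1 + y) := by
    field_simp
  rw [hfactor]
  nlinarith [mul_nonneg hP hy]

lemma inv_one_add_mul_mul_le {E P y N K : ℝ} (hE : 0 < E) (hE1 : E ≤ 1) (hP : 0 ≤ P)
    (hy : 0 ≤ y) (hK : 0 ≤ K) (hN : N ≤ K * (1 + P * y)) :
    (1 + E * P)⁻¹ * N ≤ K * E⁻¹ * (1 + y) := by
  rw [inv_mul_le_iff₀ (by positivity)]
  calc N ≤ K * (1 + P * y) := hN
    _ ≤ K * ((1 + E * P) * (E⁻¹ * (1 + y))) :=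
      mul_le_mul_of_nonneg_left (one_add_mul_le_inv_mul_one_add_mul hE hE1 hP hy) hK
    _ = (1 + E * P) * (K * E⁻¹ * (1 + y)) := by ring

lemma rpow_le_one_add_rpow {a p q : ℝ} (ha : 0 ≤ a) (hp : 0 ≤ p) (hpq : p ≤ q) :
    a ^ p ≤ 1 + a ^ q := by
  rcases le_total a 1 with ha1 | ha1
  · linarith [Real.rpow_le_one ha ha1 hp, Real.rpow_nonneg ha q]
  · linarith [Real.rpow_le_rpow_of_exponent_le ha1 hpq]

lemma sq_le_of_le_mul_one_add_rpow {N L a ρ r : ℝ} (hN : 0 ≤ N) (ha : 0 ≤ a) (hρ : 0 ≤ ρ)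
    (hρr : ρ ≤ r) (hNL : N ≤ L * (1 + a ^ ρ)) : N ^ 2 ≤ 4 * L ^ 2 * (1 + a ^ (2 * r) * a ^ 2) := by
  have hsq : (a ^ ρ) ^ 2 ≤ 1 + a ^ (2 * r) * a ^ 2 := by
    rw [← Real.rpow_mul_natCast ha, ← Real.rpow_add_natCast' ha (by push_cast; linarith)]
    exact rpow_le_one_add_rpow ha (by positivity) (by push_cast; linarith)
  have hP : 0 ≤ a ^ (2 * r) * a ^ 2 := by positivity
  calc N ^ 2 ≤ L ^ 2 * (1 + a ^ ρ) ^ 2 := by rw [← mul_pow]; exact pow_le_pow_left₀ hN hNL 2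
    _ ≤ L ^ 2 * (4 * (1 + a ^ (2 * r) * a ^ 2)) := by
      gcongr
      linarith [add_sq_le (a := (1 : ℝ)) (b := a ^ ρ)]
    _ = 4 * L ^ 2 * (1 + a ^ (2 * r) * a ^ 2) := by ring

section Taming

variable {V : Type*} [NormedAddCommGroup V] {D : ℝ}

lemma norm_inv_smul_of_one_le [NormedSpace ℝ V] (hD : 1 ≤ D) (v : V) :
    ‖D⁻¹ • v‖ = D⁻¹ * ‖v‖ := by
  rw [norm_smul, Real.norm_of_nonneg (by positivity)]

lemma norm_inv_smul_le_of_one_le [NormedSpace ℝ V] (hD : 1 ≤ D) (v : V) : ‖D⁻¹ • v‖ ≤ ‖v‖ := by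
  rw [norm_inv_smul_of_one_le hD]
  exact mul_le_of_le_one_left (norm_nonneg v) (inv_le_one_of_one_le₀ hD)

lemma norm_inv_smul_sq_le_of_one_le [NormedSpace ℝ V] (hD : 1 ≤ D) (v : V) :
    ‖D⁻¹ • v‖ ^ 2 ≤ D⁻¹ * ‖v‖ ^ 2 := by
  rw [norm_inv_smul_of_one_le hD, mul_pow, sq D⁻¹, mul_assoc]
  exact mul_le_of_le_one_left (by positivity) (inv_le_one_of_one_le₀ hD)

lemma inner_inv_smul_add_mul_norm_inv_smul_sq_le [InnerProductSpace ℝ V] {W : Type*}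
    [NormedAddCommGroup W] [NormedSpace ℝ W] (hD : 1 ≤ D) {μ c : ℝ} (hμ : 0 ≤ μ) (hc : 0 ≤ c)
    {x u : V} {v : W} (h : ⟪x, u⟫ + μ * ‖v‖ ^ 2 ≤ c) :
    ⟪x, D⁻¹ • u⟫ + μ * ‖D⁻¹ • v‖ ^ 2 ≤ c := by
  have hDinv : 0 ≤ D⁻¹ := by positivity
  calc ⟪x, D⁻¹ • u⟫ + μ * ‖D⁻¹ • v‖ ^ 2 ≤ D⁻¹ * ⟪x, u⟫ + μ * (D⁻¹ * ‖v‖ ^ 2) := by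
        rw [real_inner_smul_right]
        gcongr
        exact norm_inv_smul_sq_le_of_one_le hD v
    _ = D⁻¹ * (⟪x, u⟫ + μ * ‖v‖ ^ 2) := by ring
    _ ≤ D⁻¹ * c := mul_le_mul_of_nonneg_left h hDinv
    _ ≤ c := mul_le_of_le_one_left hc (inv_le_one_of_one_le₀ hD)

end Taming

/-- `ℝ^{d×m}` with the Frobenius norm is modelled as `EuclideanSpace ℝ (Fin d × Fin m)`. -/
theorem fte2_taming_bounds_general
    (L r ρ ϑ : ℝ) (hL : 0 < L) (hr : 0 ≤ r) (hρ0 : 0 ≤ ρ) (hρr : ρ ≤ r)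
    (hϑ : 0 < ϑ) :
    ∃ C : ℝ, 0 < C ∧ ∀ (d m : ℕ), 1 ≤ d → 1 ≤ m →
      ∀ (f : EuclideanSpace ℝ (Fin d) → EuclideanSpace ℝ (Fin d))
        (g : EuclideanSpace ℝ (Fin d) → EuclideanSpace ℝ (Fin d × Fin m)),
      (∀ x, ‖f x‖ ≤ L * (1 + ‖x‖ ^ (2 * r + 1))) →
      (∀ x, ‖g x‖ ≤ L * (1 + ‖x‖ ^ ρ)) →
      -- (i) and (ii): sublinear taming bounds
      ((∀ h : ℝ, 0 < h → h ≤ 1 → ∀ x : EuclideanSpace ℝ (Fin d),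
        ‖(1 + h ^ ϑ * ‖x‖ ^ (2 * r))⁻¹ • f x‖
            ≤ min (C * h ^ (-ϑ) * (1 + ‖x‖)) ‖f x‖ ∧
        ‖(1 + h ^ ϑ * ‖x‖ ^ (2 * r))⁻¹ • g x‖ ^ 2
            ≤ min (C * h ^ (-ϑ) * (1 + ‖x‖ ^ 2)) (‖g x‖ ^ 2)) ∧
      -- (iii): the Khasminskii-type condition is preserved
      (∀ μc C₀ : ℝ, 0 < μc → 0 ≤ C₀ →
        (∀ x : EuclideanSpace ℝ (Fin d),
          ⟪x, f x⟫ + μc * ‖g x‖ ^ 2 ≤ C₀ * (1 + ‖x‖ ^ 2)) →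
        ∀ h : ℝ, 0 < h → ∀ x : EuclideanSpace ℝ (Fin d),
          ⟪x, (1 + h ^ ϑ * ‖x‖ ^ (2 * r))⁻¹ • f x⟫
              + μc * ‖(1 + h ^ ϑ * ‖x‖ ^ (2 * r))⁻¹ • g x‖ ^ 2
            ≤ C₀ * (1 + ‖x‖ ^ 2))) := by
  refine ⟨max L (4 * L ^ 2), by positivity, fun d m _ _ f g hf hg => ⟨?_, ?_⟩⟩
  · intro h hh hh1 x
    have hE : 0 < h ^ ϑ := Real.rpow_pos_of_pos hh ϑ
    have hE1 : h ^ ϑ ≤ 1 := Real.rpow_le_one hh.le hh1 hϑ.le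
    have hP : 0 ≤ ‖x‖ ^ (2 * r) := by positivity
    have hD : 1 ≤ 1 + h ^ ϑ * ‖x‖ ^ (2 * r) := le_add_of_nonneg_right (by positivity)
    have hfx : ‖f x‖ ≤ L * (1 + ‖x‖ ^ (2 * r) * ‖x‖) := by
      rw [← Real.rpow_add_one' (norm_nonneg x) (by linarith)]
      exact hf x
    have hgx : ‖g x‖ ^ 2 ≤ 4 * L ^ 2 * (1 + ‖x‖ ^ (2 * r) * ‖x‖ ^ 2) :=
      sq_le_of_le_mul_one_add_rpow (norm_nonneg _) (norm_nonneg x) hρ0 hρr (hg x)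
    rw [Real.rpow_neg hh.le]
    refine ⟨le_min ?_ (norm_inv_smul_le_of_one_le hD _),
      le_min ?_ (pow_le_pow_left₀ (norm_nonneg _) (norm_inv_smul_le_of_one_le hD _) 2)⟩
    · calc _ = _ := norm_inv_smul_of_one_le hD (f x)
        _ ≤ L * (h ^ ϑ)⁻¹ * (1 + ‖x‖) :=
          inv_one_add_mul_mul_le hE hE1 hP (norm_nonneg x) hL.le hfx
        _ ≤ _ := by gcongr; exact le_max_left _ _
    · calc _ ≤ _ := norm_inv_smul_sq_le_of_one_le hD (g x)
        _ ≤ 4 * L ^ 2 * (h ^ ϑ)⁻¹ * (1 + ‖x‖ ^ 2) :=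
          inv_one_add_mul_mul_le hE hE1 hP (sq_nonneg _) (by positivity) hgx
        _ ≤ _ := by gcongr; exact le_max_right _ _
  · intro μc C₀ hμ hC₀ hK h hh x
    have hD : 1 ≤ 1 + h ^ ϑ * ‖x‖ ^ (2 * r) := le_add_of_nonneg_right (by positivity)
    exact inner_inv_smul_add_mul_norm_inv_smul_sq_le hD hμ.le (by positivity) (hK x)

/-- The fully tamed Euler (FTE2) coefficients
`f̄_h(x) = f(x)/(1+h^ϑ|x|^{2r})`, `ḡ_h(x) = g(x)/(1+h^ϑ|x|^{2r})`
satisfy the sublinear taming bounds (i), (ii) with parameter `θ = ϑ`, and (iii)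
inherit the one-sided (Khasminskii-type) condition from `f` and `g`.
`ℝ^{d×m}` is modelled as `EuclideanSpace ℝ (Fin d × Fin m)` (Frobenius norm). -/
theorem fte2_taming_bounds
    (L r ρ ϑ : ℝ) (hL : 0 < L) (hr : 0 ≤ r) (hρ0 : 0 ≤ ρ) (hρr : ρ ≤ r)
    (hϑ : 0 < ϑ) (hϑ' : ϑ ≤ 1 / 2) :
    ∃ C : ℝ, 0 < C ∧ ∀ (d m : ℕ), 1 ≤ d → 1 ≤ m →
      ∀ (f : EuclideanSpace ℝ (Fin d) → EuclideanSpace ℝ (Fin d))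
        (g : EuclideanSpace ℝ (Fin d) → EuclideanSpace ℝ (Fin d × Fin m)),
      (∀ x, ‖f x‖ ≤ L * (1 + ‖x‖ ^ (2 * r + 1))) →
      (∀ x, ‖g x‖ ≤ L * (1 + ‖x‖ ^ ρ)) →
      -- (i) and (ii): sublinear taming bounds
      ((∀ h : ℝ, 0 < h → h ≤ 1 → ∀ x : EuclideanSpace ℝ (Fin d),
        ‖(1 + h ^ ϑ * ‖x‖ ^ (2 * r))⁻¹ • f x‖
            ≤ min (C * h ^ (-ϑ) * (1 + ‖x‖)) ‖f x‖ ∧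
        ‖(1 + h ^ ϑ * ‖x‖ ^ (2 * r))⁻¹ • g x‖ ^ 2
            ≤ min (C * h ^ (-ϑ) * (1 + ‖x‖ ^ 2)) (‖g x‖ ^ 2)) ∧
      -- (iii): the Khasminskii-type condition is preserved
      (∀ μc C₀ : ℝ, 0 < μc → 0 ≤ C₀ →
        (∀ x : EuclideanSpace ℝ (Fin d),
          ⟪x, f x⟫ + μc * ‖g x‖ ^ 2 ≤ C₀ * (1 + ‖x‖ ^ 2)) →
        ∀ h : ℝ, 0 < h → ∀ x : EuclideanSpace ℝ (Fin d),
          ⟪x, (1 + h ^ ϑ * ‖x‖ ^ (2 * r))⁻¹ • f x⟫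
              + μc * ‖(1 + h ^ ϑ * ‖x‖ ^ (2 * r))⁻¹ • g x‖ ^ 2
            ≤ C₀ * (1 + ‖x‖ ^ 2))) :=
  fte2_taming_bounds_general L r ρ ϑ hL hr hρ0 hρr hϑ
end

section
/- Let d, m ≥ 1, f : ℝ^d → ℝ^d, g : ℝ^d → ℝ^{d×m}. Then for every h > 0 and every x ∈ ℝ^d, the modified Euler scheme (MES) coefficients satisfy (i) |f̄_h(x)| ≤ min( 1/(2√h), |f(x)| ) and (ii) ‖ḡ_h(x)‖ ≤ ‖g(x)‖; moreover, (iii) if there exist μ > 0 and C₀ ≥ 0 with ⟨x, f(x)⟩ + μ‖g(x)‖² ≤ C₀(1+|x|²) for all x ∈ ℝ^d, then ⟨x, f̄_h(x)⟩ + μ‖ḡ_h(x)‖² ≤ C₀(1+|x|²) for all x ∈ ℝ^d and all h > 0. -/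
/-!
The taming factor `c = (1 + h|f(x)|²)⁻¹` lies in `(0, 1]`, so it can only shrink norms, which gives
`|f̄_h(x)| ≤ |f(x)|` and (ii). The bound by `1/(2√h)` is AM-GM: `2√h y ≤ 1 + h y²`. For (iii),
`⟨x, c f⟩ + μ‖c g‖² ≤ c (⟨x, f⟩ + μ‖g‖²)` because `c² ≤ c`, and multiplying by `c ∈ [0, 1]` keeps a
quantity below any nonnegative upper bound.
-/

open scoped RealInnerProductSpace

lemma inv_one_add_mul_sq_mem_Icc {h : ℝ} (hh : 0 ≤ h) (y : ℝ) :
    (1 + h * y ^ 2)⁻¹ ∈ Set.Icc (0 : ℝ) 1 :=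
  ⟨by positivity, inv_le_one_of_one_le₀ (le_add_of_nonneg_right (by positivity))⟩

lemma inv_one_add_mul_sq_mul_le_inv_two_sqrt {h : ℝ} (hh : 0 < h) (y : ℝ) :
    (1 + h * y ^ 2)⁻¹ * y ≤ 1 / (2 * Real.sqrt h) := by
  have hsqrt : Real.sqrt h * Real.sqrt h = h := Real.mul_self_sqrt hh.le
  rw [inv_mul_eq_div, div_le_div_iff₀ (by positivity) (by positivity)]
  nlinarith [sq_nonneg (Real.sqrt h * y - 1)]

lemma norm_smul_le_of_nonneg_of_le_one {E : Type*} [SeminormedAddCommGroup E] [NormedSpace ℝ E]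
    {c : ℝ} (hc₀ : 0 ≤ c) (hc₁ : c ≤ 1) (v : E) : ‖c • v‖ ≤ ‖v‖ := by
  rw [norm_smul, Real.norm_of_nonneg hc₀]
  exact mul_le_of_le_one_left (norm_nonneg v) hc₁

lemma mul_le_of_nonneg_of_le_one_of_le {c s R : ℝ} (hc₀ : 0 ≤ c) (hc₁ : c ≤ 1) (hsR : s ≤ R)
    (hR : 0 ≤ R) : c * s ≤ R := by
  rcases le_total 0 s with hs | hs
  · exact (mul_le_of_le_one_left hs hc₁).trans hsR
  · exact (mul_nonpos_of_nonneg_of_nonpos hc₀ hs).trans hR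

lemma inner_smul_add_mul_norm_smul_sq_le {E F : Type*} [NormedAddCommGroup E] [InnerProductSpace ℝ E]
    [SeminormedAddCommGroup F] [NormedSpace ℝ F] {c μ : ℝ} (hc₀ : 0 ≤ c) (hc₁ : c ≤ 1) (hμ : 0 ≤ μ)
    (x v : E) (w : F) : ⟪x, c • v⟫ + μ * ‖c • w‖ ^ 2 ≤ c * (⟪x, v⟫ + μ * ‖w‖ ^ 2) := by
  have hc_sq : c ^ 2 ≤ c := by nlinarith
  rw [real_inner_smul_right, norm_smul, Real.norm_of_nonneg hc₀, mul_pow]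
  linarith [mul_le_mul_of_nonneg_left hc_sq (mul_nonneg hμ (sq_nonneg ‖w‖))]

theorem mes_taming_bounds_general
    (d m : ℕ)
    (f : EuclideanSpace ℝ (Fin d) → EuclideanSpace ℝ (Fin d))
    (g : EuclideanSpace ℝ (Fin d) → EuclideanSpace ℝ (Fin d × Fin m)) :
    -- (i) and (ii)
    (∀ h : ℝ, 0 < h → ∀ x : EuclideanSpace ℝ (Fin d),
      ‖(1 + h * ‖f x‖ ^ 2)⁻¹ • f x‖ ≤ min (1 / (2 * Real.sqrt h)) ‖f x‖ ∧
      ‖(1 + h * ‖f x‖ ^ 2)⁻¹ • g x‖ ≤ ‖g x‖) ∧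
    -- (iii)
    (∀ μc C₀ : ℝ, 0 < μc → 0 ≤ C₀ →
      (∀ x : EuclideanSpace ℝ (Fin d),
        ⟪x, f x⟫ + μc * ‖g x‖ ^ 2 ≤ C₀ * (1 + ‖x‖ ^ 2)) →
      ∀ h : ℝ, 0 < h → ∀ x : EuclideanSpace ℝ (Fin d),
        ⟪x, (1 + h * ‖f x‖ ^ 2)⁻¹ • f x⟫
            + μc * ‖(1 + h * ‖f x‖ ^ 2)⁻¹ • g x‖ ^ 2
          ≤ C₀ * (1 + ‖x‖ ^ 2)) := by
  refine ⟨fun h hh x => ?_, fun μc C₀ hμ hC₀ hK h hh x => ?_⟩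
  · obtain ⟨hc₀, hc₁⟩ := inv_one_add_mul_sq_mem_Icc hh.le ‖f x‖
    refine ⟨le_min ?_ (norm_smul_le_of_nonneg_of_le_one hc₀ hc₁ _),
      norm_smul_le_of_nonneg_of_le_one hc₀ hc₁ _⟩
    rw [norm_smul, Real.norm_of_nonneg hc₀]
    exact inv_one_add_mul_sq_mul_le_inv_two_sqrt hh _
  · obtain ⟨hc₀, hc₁⟩ := inv_one_add_mul_sq_mem_Icc hh.le ‖f x‖
    exact (inner_smul_add_mul_norm_smul_sq_le hc₀ hc₁ hμ.le _ _ _).trans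
      (mul_le_of_nonneg_of_le_one_of_le hc₀ hc₁ (hK x) (by positivity))

/-- The modified Euler scheme (MES) coefficients
`f̄_h(x) = f(x)/(1+h|f(x)|²)`, `ḡ_h(x) = g(x)/(1+h|f(x)|²)` satisfy
(i) `|f̄_h(x)| ≤ min(1/(2√h), |f(x)|)`, (ii) `‖ḡ_h(x)‖ ≤ ‖g(x)‖`, and
(iii) inherit the one-sided (Khasminskii-type) condition from `f` and `g`.
`ℝ^{d×m}` is modelled as `EuclideanSpace ℝ (Fin d × Fin m)` (Frobenius norm). -/
theorem mes_taming_bounds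
    (d m : ℕ) (hd : 1 ≤ d) (hm : 1 ≤ m)
    (f : EuclideanSpace ℝ (Fin d) → EuclideanSpace ℝ (Fin d))
    (g : EuclideanSpace ℝ (Fin d) → EuclideanSpace ℝ (Fin d × Fin m)) :
    -- (i) and (ii)
    (∀ h : ℝ, 0 < h → ∀ x : EuclideanSpace ℝ (Fin d),
      ‖(1 + h * ‖f x‖ ^ 2)⁻¹ • f x‖ ≤ min (1 / (2 * Real.sqrt h)) ‖f x‖ ∧
      ‖(1 + h * ‖f x‖ ^ 2)⁻¹ • g x‖ ≤ ‖g x‖) ∧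
    -- (iii)
    (∀ μc C₀ : ℝ, 0 < μc → 0 ≤ C₀ →
      (∀ x : EuclideanSpace ℝ (Fin d),
        ⟪x, f x⟫ + μc * ‖g x‖ ^ 2 ≤ C₀ * (1 + ‖x‖ ^ 2)) →
      ∀ h : ℝ, 0 < h → ∀ x : EuclideanSpace ℝ (Fin d),
        ⟪x, (1 + h * ‖f x‖ ^ 2)⁻¹ • f x⟫
            + μc * ‖(1 + h * ‖f x‖ ^ 2)⁻¹ • g x‖ ^ 2
          ≤ C₀ * (1 + ‖x‖ ^ 2)) :=
  mes_taming_bounds_general d m f g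
end

section
/- Let d, m ≥ 1, L > 0, ρ ≥ 0, and suppose g : ℝ^d → ℝ^{d×m} satisfies ‖g(x)‖ ≤ L(1+|x|^{ρ}) for all x ∈ ℝ^d. Define the balanced-scheme diffusion ḡ_h(x) ∈ ℝ^{d×m} entrywise by (ḡ_h(x))_{ij} = h^{−1/2} tanh(h^{1/2} g_{ij}(x)). Then for all h > 0 and all x ∈ ℝ^d, ‖ḡ_h(x) − g(x)‖ ≤ (h/3)‖g(x)‖³ ≤ C h(1+|x|^{3ρ}), where C is a constant depending only on L. -/
/-! The bound `|tanh u - u| ≤ |u|³/3` follows by comparing derivatives: `tanh' = 1 - tanh²`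
and `|tanh u| ≤ |u|`. With `u = √h z` it gives `|h^{-1/2} tanh (√h z) - z| ≤ (h/3)|z|³` entrywise,
and `∑ g_{ij}⁶ ≤ (∑ g_{ij}²)³` turns this into the Frobenius bound. Finally
`(1 + a)³ ≤ 4(1 + a³)` makes `C = 4L³/3` work. -/

namespace Real

theorem hasDerivAt_tanh (x : ℝ) : HasDerivAt tanh (1 - tanh x ^ 2) x := by
  have h := (hasDerivAt_sinh x).div (hasDerivAt_cosh x) (cosh_pos x).ne'
  rw [show sinh / cosh = tanh from funext fun y => (tanh_eq_sinh_div_cosh y).symm] at h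
  refine h.congr_deriv ?_
  rw [tanh_eq_sinh_div_cosh]
  field_simp

theorem strictMono_tanh : StrictMono tanh :=
  strictMono_of_hasDerivAt_pos hasDerivAt_tanh fun x => sub_pos.mpr (tanh_sq_lt_one x)

theorem monotone_id_sub_tanh : Monotone fun x => x - tanh x :=
  monotone_of_hasDerivAt_nonneg (fun x => (hasDerivAt_id x).sub (hasDerivAt_tanh x))
    fun x => by simp only [Pi.zero_apply, sub_sub_cancel]; positivity

theorem abs_tanh_le_abs (x : ℝ) : |tanh x| ≤ |x| := by
  suffices key : ∀ y, 0 ≤ y → |tanh y| ≤ y by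
    rcases le_total 0 x with hx | hx
    · simpa [abs_of_nonneg hx] using key x hx
    · simpa [tanh_neg, abs_of_nonpos hx] using key (-x) (neg_nonneg.mpr hx)
  intro y hy
  have h_nonneg : 0 ≤ tanh y := by simpa using strictMono_tanh.monotone hy
  have h_le : tanh y ≤ y := by simpa using monotone_id_sub_tanh hy
  rwa [abs_of_nonneg h_nonneg]

theorem monotone_cube_div_three_sub_id_add_tanh :
    Monotone fun x => x ^ 3 / 3 - x + tanh x :=
  monotone_of_hasDerivAt_nonneg
    (fun x => (((hasDerivAt_pow 3 x).div_const 3).sub (hasDerivAt_id x)).add (hasDerivAt_tanh x))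
    fun x => by
      have := sq_le_sq.mpr (abs_tanh_le_abs x)
      norm_num
      linarith

theorem abs_tanh_sub_self_le (x : ℝ) : |tanh x - x| ≤ |x| ^ 3 / 3 := by
  suffices key : ∀ y, 0 ≤ y → |tanh y - y| ≤ y ^ 3 / 3 by
    rcases le_total 0 x with hx | hx
    · simpa [abs_of_nonneg hx] using key x hx
    · calc |tanh x - x| = |tanh (-x) - -x| := by rw [tanh_neg, ← abs_neg]; congr 1; ring
        _ ≤ (-x) ^ 3 / 3 := key (-x) (neg_nonneg.mpr hx)
        _ = |x| ^ 3 / 3 := by rw [abs_of_nonpos hx]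
  intro y hy
  have h_le : tanh y ≤ y := by simpa using monotone_id_sub_tanh hy
  have h_cube : y - tanh y ≤ y ^ 3 / 3 := by
    have := monotone_cube_div_three_sub_id_add_tanh hy
    simp only [tanh_zero] at this
    linarith
  rw [abs_of_nonpos (sub_nonpos.mpr h_le)]
  linarith

end Real

theorem abs_inv_mul_tanh_mul_sub_le {s : ℝ} (hs : s ≠ 0) (z : ℝ) :
    |s⁻¹ * Real.tanh (s * z) - z| ≤ s ^ 2 / 3 * |z| ^ 3 := by
  have h_eq : s⁻¹ * Real.tanh (s * z) - z = s⁻¹ * (Real.tanh (s * z) - s * z) := by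
    field_simp
  calc |s⁻¹ * Real.tanh (s * z) - z| ≤ |s|⁻¹ * (|s * z| ^ 3 / 3) := by
        rw [h_eq, abs_mul, abs_inv]
        gcongr
        exact Real.abs_tanh_sub_self_le _
    _ = s ^ 2 / 3 * |z| ^ 3 := by
        rw [abs_mul, mul_pow, ← sq_abs s]
        field_simp

theorem Finset.sum_pow_le_pow_sum {ι R : Type*} [CommSemiring R] [PartialOrder R]
    [IsOrderedRing R] {s : Finset ι} {f : ι → R} (hf : ∀ i ∈ s, 0 ≤ f i) {n : ℕ} (hn : n ≠ 0) :
    ∑ i ∈ s, f i ^ n ≤ (∑ i ∈ s, f i) ^ n := by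
  classical
  induction s using Finset.induction_on with
  | empty => simp [zero_pow hn]
  | insert a s ha ih =>
    rw [Finset.sum_insert ha, Finset.sum_insert ha]
    have hs := Finset.forall_of_forall_insert hf
    calc f a ^ n + ∑ i ∈ s, f i ^ n ≤ f a ^ n + (∑ i ∈ s, f i) ^ n := by gcongr; exact ih hs
      _ ≤ (f a + ∑ i ∈ s, f i) ^ n :=
        pow_add_pow_le (hf a (Finset.mem_insert_self a s)) (Finset.sum_nonneg hs) hn

theorem EuclideanSpace.norm_le_mul_norm_pow_of_abs_le {ι : Type*} [Fintype ι]
    {v w : EuclideanSpace ℝ ι} {c : ℝ} (hc : 0 ≤ c) {n : ℕ} (hn : n ≠ 0)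
    (h : ∀ i, |v i| ≤ c * |w i| ^ n) : ‖v‖ ≤ c * ‖w‖ ^ n := by
  refine le_of_sq_le_sq ?_ (by positivity)
  calc ‖v‖ ^ 2 = ∑ i, |v i| ^ 2 := by simp [EuclideanSpace.real_norm_sq_eq]
    _ ≤ ∑ i, c ^ 2 * (w i ^ 2) ^ n := by
        gcongr with i
        calc |v i| ^ 2 ≤ (c * |w i| ^ n) ^ 2 := by gcongr; exact h i
          _ = c ^ 2 * (w i ^ 2) ^ n := by rw [mul_pow, ← pow_mul, mul_comm n 2, pow_mul, sq_abs]
    _ ≤ c ^ 2 * (∑ i, w i ^ 2) ^ n := by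
        rw [← Finset.mul_sum]
        gcongr
        exact Finset.sum_pow_le_pow_sum (fun i _ => sq_nonneg _) hn
    _ = (c * ‖w‖ ^ n) ^ 2 := by
        rw [mul_pow, ← pow_mul, mul_comm n 2, pow_mul, EuclideanSpace.real_norm_sq_eq]

theorem one_add_pow_three_le {a : ℝ} (ha : 0 ≤ a) : (1 + a) ^ 3 ≤ 4 * (1 + a ^ 3) := by
  nlinarith [sq_nonneg (1 - a), mul_nonneg ha (sq_nonneg (1 - a))]

/-- `ℝ^{d×m}` is modelled as `EuclideanSpace ℝ (Fin d × Fin m)`, whose norm is the Frobenius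
norm. -/
theorem bs_diffusion_modification_error (L : ℝ) (hL : 0 < L) :
    ∃ C : ℝ, 0 < C ∧ ∀ (d m : ℕ), 1 ≤ d → 1 ≤ m → ∀ (ρ : ℝ), 0 ≤ ρ →
      ∀ (g : EuclideanSpace ℝ (Fin d) → EuclideanSpace ℝ (Fin d × Fin m)),
      (∀ x, ‖g x‖ ≤ L * (1 + ‖x‖ ^ ρ)) →
      ∀ h : ℝ, 0 < h → ∀ x : EuclideanSpace ℝ (Fin d),
        ‖(WithLp.equiv 2 (Fin d × Fin m → ℝ)).symm
              (fun ij => (Real.sqrt h)⁻¹ * Real.tanh (Real.sqrt h * g x ij)) - g x‖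
            ≤ h / 3 * ‖g x‖ ^ 3 ∧
        h / 3 * ‖g x‖ ^ 3 ≤ C * h * (1 + ‖x‖ ^ (3 * ρ)) := by
  refine ⟨4 * L ^ 3 / 3, by positivity, fun d m _ _ ρ _ g hg h hh x => ⟨?_, ?_⟩⟩
  · refine EuclideanSpace.norm_le_mul_norm_pow_of_abs_le (by positivity) three_ne_zero fun ij => ?_
    have := abs_inv_mul_tanh_mul_sub_le (Real.sqrt_pos.mpr hh).ne' (g x ij)
    rwa [Real.sq_sqrt hh.le] at this
  · have h_rpow : (‖x‖ ^ ρ) ^ 3 = ‖x‖ ^ (3 * ρ) := by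
      rw [← Real.rpow_natCast, ← Real.rpow_mul (norm_nonneg x), mul_comm]
      norm_num
    calc h / 3 * ‖g x‖ ^ 3 ≤ h / 3 * (L * (1 + ‖x‖ ^ ρ)) ^ 3 := by gcongr; exact hg x
      _ = h / 3 * L ^ 3 * (1 + ‖x‖ ^ ρ) ^ 3 := by ring
      _ ≤ h / 3 * L ^ 3 * (4 * (1 + (‖x‖ ^ ρ) ^ 3)) := by
          gcongr; exact one_add_pow_three_le (by positivity)
      _ = 4 * L ^ 3 / 3 * h * (1 + ‖x‖ ^ (3 * ρ)) := by rw [h_rpow]; ring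
end

section
/- Let d, m ≥ 1, L > 0, r ≥ 0, 0 ≤ ρ ≤ r, q ≥ 1, κ > 0, and suppose f : ℝ^d → ℝ^d satisfies |f(x)| ≤ L(1+|x|^{2r+1}) and g : ℝ^d → ℝ^{d×m} satisfies ‖g(x)‖ ≤ L(1+|x|^ρ) for all x ∈ ℝ^d. Let (Ω,𝓕,ℙ) be a probability space, h ∈ (0,1], and let ξ : Ω → ℝ^m be a random vector with (E[|ξ|^{2q}])^{1/(2q)} ≤ κ h^{1/2}. Define the random balanced-type coefficients f̄_h(x)(ω) = f(x)/(1+h|f(x)|+|g(x)ξ(ω)|) and ḡ_h(x)(ω) = g(x)/(1+h|f(x)|+|g(x)ξ(ω)|). Then there exists a constant C depending only on L, r, ρ, q and κ such that for all x ∈ ℝ^d, (E[|f̄_h(x) − f(x)|^{2q}])^{1/(2q)} ≤ C h^{1/2}(1+|x|^{4r+2}) and (E[‖ḡ_h(x) − g(x)‖^{2q}])^{1/(2q)} ≤ C h^{1/2}(1+|x|^{2r+ρ+1}). -/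
/-!
Since the denominator `c = 1 + h|f(x)| + |g(x)ξ|` is at least `1`, dividing by it moves a vector `w`
by at most `(c - 1)|w| ≤ (h|f(x)| + ‖g(x)‖ |ξ|)|w|`. Minkowski's inequality in `L^{2q}` and the moment
bound on `ξ` turn this into `(h|f(x)| + κ h^{1/2} ‖g(x)‖)|w| ≤ h^{1/2}(|f(x)| + κ‖g(x)‖)|w|`, and the
growth conditions bound the product by polynomial weights, using `(1+t^a)(1+t^b) ≤ 4(1+t^{a+b})`.
-/

open MeasureTheory

/-- The matrix-vector product, with `ℝ^{d×m}` modelled as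
`EuclideanSpace ℝ (Fin d × Fin m)` (whose norm is the Frobenius norm). -/
noncomputable def matMulVec {d m : ℕ} (A : EuclideanSpace ℝ (Fin d × Fin m))
    (v : EuclideanSpace ℝ (Fin m)) : EuclideanSpace ℝ (Fin d) :=
  (WithLp.equiv 2 (Fin d → ℝ)).symm fun i => ∑ j, A (i, j) * v j

lemma rpow_le_one_add_rpow_s14 {t a c : ℝ} (ht : 0 ≤ t) (ha : 0 ≤ a) (hac : a ≤ c) :
    t ^ a ≤ 1 + t ^ c := by
  rcases le_or_gt t 1 with ht1 | ht1
  · linarith [Real.rpow_le_one ht ht1 ha, Real.rpow_nonneg ht c]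
  · linarith [Real.rpow_le_rpow_of_exponent_le ht1.le hac]

lemma one_add_rpow_mul_one_add_rpow_le {t a b : ℝ} (ht : 0 ≤ t) (ha : 0 ≤ a) (hb : 0 ≤ b) :
    (1 + t ^ a) * (1 + t ^ b) ≤ 4 * (1 + t ^ (a + b)) := by
  have hab : t ^ (a + b) = t ^ a * t ^ b := Real.rpow_add_of_nonneg ht ha hb
  have hta : t ^ a ≤ 1 + t ^ (a + b) := rpow_le_one_add_rpow_s14 ht ha (by linarith)
  have htb : t ^ b ≤ 1 + t ^ (a + b) := rpow_le_one_add_rpow_s14 ht hb (by linarith)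
  nlinarith [Real.rpow_nonneg ht (a + b)]

lemma add_mul_mul_le_of_rpow_growth {L κ t a b c F G W : ℝ} (hL : 0 ≤ L) (hκ : 0 ≤ κ)
    (ht : 0 ≤ t) (hb : 0 ≤ b) (hba : b ≤ a) (hc : 0 ≤ c) (hF : F ≤ L * (1 + t ^ a))
    (hG : G ≤ L * (1 + t ^ b)) (hW0 : 0 ≤ W) (hW : W ≤ L * (1 + t ^ c)) :
    (F + κ * G) * W ≤ 4 * (1 + 2 * κ) * L ^ 2 * (1 + t ^ (a + c)) := by
  have ha : 0 ≤ a := hb.trans hba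
  have htb : L * t ^ b ≤ L * (1 + t ^ a) :=
    mul_le_mul_of_nonneg_left (rpow_le_one_add_rpow_s14 ht hb hba) hL
  have hFG : F + κ * G ≤ (1 + 2 * κ) * L * (1 + t ^ a) := by
    nlinarith [mul_nonneg hL (Real.rpow_nonneg ht a)]
  have hwt := one_add_rpow_mul_one_add_rpow_le ht ha hc
  calc _ ≤ (1 + 2 * κ) * L * (1 + t ^ a) * (L * (1 + t ^ c)) :=
        mul_le_mul hFG hW hW0 (by positivity)
    _ = (1 + 2 * κ) * L ^ 2 * ((1 + t ^ a) * (1 + t ^ c)) := by ring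
    _ ≤ (1 + 2 * κ) * L ^ 2 * (4 * (1 + t ^ (a + c))) := by gcongr
    _ = _ := by ring

lemma norm_matMulVec_le {d m : ℕ} (A : EuclideanSpace ℝ (Fin d × Fin m))
    (v : EuclideanSpace ℝ (Fin m)) : ‖matMulVec A v‖ ≤ ‖A‖ * ‖v‖ := by
  simp only [EuclideanSpace.norm_eq, Real.norm_eq_abs, sq_abs]
  rw [← Real.sqrt_mul (by positivity)]
  apply Real.sqrt_le_sqrt
  calc ∑ i, matMulVec A v i ^ 2 ≤ ∑ i, (∑ j, A (i, j) ^ 2) * ∑ j, v j ^ 2 :=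
        Finset.sum_le_sum fun i _ =>
          Finset.sum_mul_sq_le_sq_mul_sq Finset.univ (fun j ↦ A (i, j)) (fun j ↦ v j)
    _ = (∑ p : Fin d × Fin m, A p ^ 2) * ∑ j, v j ^ 2 := by
        rw [← Finset.sum_mul, Fintype.sum_prod_type]

lemma norm_inv_smul_sub_self_le {E : Type*} [NormedAddCommGroup E] [NormedSpace ℝ E]
    {c : ℝ} (hc : 1 ≤ c) (w : E) : ‖c⁻¹ • w - w‖ ≤ (c - 1) * ‖w‖ := by
  have hc1 : c⁻¹ ≤ 1 := inv_le_one_of_one_le₀ hc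
  have hinv : 1 - c⁻¹ ≤ c - 1 := by
    have : c * c⁻¹ = 1 := mul_inv_cancel₀ (one_pos.trans_le hc).ne'
    nlinarith
  rw [show c⁻¹ • w - w = (c⁻¹ - 1) • w by rw [sub_smul, one_smul], norm_smul, Real.norm_eq_abs,
    abs_sub_comm, abs_of_nonneg (sub_nonneg.mpr hc1)]
  gcongr

section Moments

variable {Ω : Type*} [MeasurableSpace Ω] {P : Measure Ω} [IsProbabilityMeasure P]
  {p : ENNReal} {E F : Type*} [NormedAddCommGroup E] [NormedAddCommGroup F]

lemma eLpNorm_le_of_norm_le_add_mul_norm {X : Ω → E} (hX : AEStronglyMeasurable X P)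
    (hp : 1 ≤ p) {K a b : ℝ} (hK : 0 ≤ K) (hXK : eLpNorm X p P ≤ ENNReal.ofReal K)
    (ha : 0 ≤ a) (hb : 0 ≤ b) {Y : Ω → F} (hY : ∀ ω, ‖Y ω‖ ≤ a + b * ‖X ω‖) :
    eLpNorm Y p P ≤ ENNReal.ofReal (a + b * K) := by
  have hp0 : p ≠ 0 := (zero_lt_one.trans_le hp).ne'
  calc eLpNorm Y p P ≤ eLpNorm ((fun _ ↦ a) + fun ω ↦ b • ‖X ω‖) p P := eLpNorm_mono_real hY
    _ ≤ eLpNorm (fun _ ↦ a) p P + eLpNorm (b • fun ω ↦ ‖X ω‖) p P :=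
        eLpNorm_add_le aestronglyMeasurable_const (hX.norm.const_smul b) hp
    _ ≤ ENNReal.ofReal a + ENNReal.ofReal b * ENNReal.ofReal K := by
        rw [eLpNorm_const a hp0 (IsProbabilityMeasure.ne_zero P), eLpNorm_const_smul,
          eLpNorm_norm, Real.enorm_eq_ofReal ha, Real.enorm_eq_ofReal hb]
        simp only [measure_univ, ENNReal.one_rpow, mul_one]
        gcongr
    _ = ENNReal.ofReal (a + b * K) := by
        rw [← ENNReal.ofReal_mul hb, ← ENNReal.ofReal_add ha (mul_nonneg hb hK)]

lemma eLpNorm_inv_one_add_smul_sub_le {d m : ℕ} {ξ : Ω → EuclideanSpace ℝ (Fin m)}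
    (hξ : AEStronglyMeasurable ξ P) (hp : 1 ≤ p) {K : ℝ} (hK : 0 ≤ K)
    (hξK : eLpNorm ξ p P ≤ ENNReal.ofReal K) (A : EuclideanSpace ℝ (Fin d × Fin m))
    {a : ℝ} (ha : 0 ≤ a) [NormedSpace ℝ F] (w : F) :
    eLpNorm (fun ω ↦ (1 + a + ‖matMulVec A (ξ ω)‖)⁻¹ • w - w) p P
      ≤ ENNReal.ofReal ((a + ‖A‖ * K) * ‖w‖) := by
  rw [show (a + ‖A‖ * K) * ‖w‖ = a * ‖w‖ + ‖A‖ * ‖w‖ * K by ring]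
  refine eLpNorm_le_of_norm_le_add_mul_norm hξ hp hK hξK (by positivity) (by positivity) fun ω ↦ ?_
  have hAξ := norm_matMulVec_le A (ξ ω)
  calc _ ≤ (1 + a + ‖matMulVec A (ξ ω)‖ - 1) * ‖w‖ :=
        norm_inv_smul_sub_self_le (by linarith [norm_nonneg (matMulVec A (ξ ω))]) w
    _ ≤ a * ‖w‖ + ‖A‖ * ‖w‖ * ‖ξ ω‖ := by nlinarith [norm_nonneg w]

end Moments

theorem bts_modification_error_general
    (L r ρ q κ : ℝ) (hL : 0 < L) (hρ0 : 0 ≤ ρ) (hρr : ρ ≤ r)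
    (hq : 1 ≤ q) (hκ : 0 < κ) :
    ∃ C : ℝ, 0 < C ∧ ∀ (d m : ℕ), 1 ≤ d → 1 ≤ m →
      ∀ (Ω : Type) [MeasurableSpace Ω] (P : Measure Ω), IsProbabilityMeasure P →
      ∀ h : ℝ, 0 < h → h ≤ 1 →
      ∀ (ξ : Ω → EuclideanSpace ℝ (Fin m)), Measurable ξ →
        eLpNorm ξ (ENNReal.ofReal (2 * q)) P ≤ ENNReal.ofReal (κ * h ^ ((1 : ℝ) / 2)) →
      ∀ (f : EuclideanSpace ℝ (Fin d) → EuclideanSpace ℝ (Fin d))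
        (g : EuclideanSpace ℝ (Fin d) → EuclideanSpace ℝ (Fin d × Fin m)),
      (∀ x, ‖f x‖ ≤ L * (1 + ‖x‖ ^ (2 * r + 1))) →
      (∀ x, ‖g x‖ ≤ L * (1 + ‖x‖ ^ ρ)) →
      ∀ x : EuclideanSpace ℝ (Fin d),
        eLpNorm (fun ω =>
            (1 + h * ‖f x‖ + ‖matMulVec (g x) (ξ ω)‖)⁻¹ • f x - f x)
            (ENNReal.ofReal (2 * q)) P
          ≤ ENNReal.ofReal (C * h ^ ((1 : ℝ) / 2) * (1 + ‖x‖ ^ (4 * r + 2))) ∧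
        eLpNorm (fun ω =>
            (1 + h * ‖f x‖ + ‖matMulVec (g x) (ξ ω)‖)⁻¹ • g x - g x)
            (ENNReal.ofReal (2 * q)) P
          ≤ ENNReal.ofReal (C * h ^ ((1 : ℝ) / 2) * (1 + ‖x‖ ^ (2 * r + ρ + 1))) := by
  refine ⟨4 * (1 + 2 * κ) * L ^ 2, by positivity, ?_⟩
  intro d m _ _ Ω _ P _ h hh0 hh1 ξ hξ hξK f g hf hg x
  set s := h ^ ((1 : ℝ) / 2)
  have hp : 1 ≤ ENNReal.ofReal (2 * q) := ENNReal.one_le_ofReal.mpr (by linarith)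
  have hκs : 0 ≤ κ * s := by positivity
  have hhf : 0 ≤ h * ‖f x‖ := by positivity
  have hhs : h ≤ s := Real.self_le_rpow_of_le_one hh0.le hh1 (by norm_num)
  have hweight : ∀ c W, 0 ≤ c → 0 ≤ W → W ≤ L * (1 + ‖x‖ ^ c) →
      (h * ‖f x‖ + ‖g x‖ * (κ * s)) * W
        ≤ 4 * (1 + 2 * κ) * L ^ 2 * s * (1 + ‖x‖ ^ (2 * r + 1 + c)) := fun c W hc hW0 hW ↦
    calc _ ≤ s * ((‖f x‖ + κ * ‖g x‖) * W) := by
          nlinarith [mul_le_mul_of_nonneg_right hhs (mul_nonneg (norm_nonneg (f x)) hW0)]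
      _ ≤ s * (4 * (1 + 2 * κ) * L ^ 2 * (1 + ‖x‖ ^ (2 * r + 1 + c))) :=
          mul_le_mul_of_nonneg_left (add_mul_mul_le_of_rpow_growth hL.le hκ.le (norm_nonneg x)
            hρ0 (by linarith) hc (hf x) (hg x) hW0 hW) (by positivity)
      _ = _ := by ring
  constructor
  · refine (eLpNorm_inv_one_add_smul_sub_le hξ.aestronglyMeasurable hp hκs hξK (g x) hhf (f x)).trans
      (ENNReal.ofReal_le_ofReal ?_)
    convert hweight (2 * r + 1) _ (by linarith) (norm_nonneg _) (hf x) using 4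
    ring
  · refine (eLpNorm_inv_one_add_smul_sub_le hξ.aestronglyMeasurable hp hκs hξK (g x) hhf (g x)).trans
      (ENNReal.ofReal_le_ofReal ?_)
    convert hweight ρ _ hρ0 (norm_nonneg _) (hg x) using 4
    ring

/-- `L^{2q}` modification-error bounds for the balanced-type scheme (BTS):
the random coefficients `f̄_h(x)(ω) = f(x)/(1+h|f(x)|+|g(x)ξ(ω)|)` and
`ḡ_h(x)(ω) = g(x)/(1+h|f(x)|+|g(x)ξ(ω)|)` differ from `f`, `g` by
`O(h^{1/2})` in `L^{2q}`, with polynomial weights. -/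
theorem bts_modification_error
    (L r ρ q κ : ℝ) (hL : 0 < L) (hr : 0 ≤ r) (hρ0 : 0 ≤ ρ) (hρr : ρ ≤ r)
    (hq : 1 ≤ q) (hκ : 0 < κ) :
    ∃ C : ℝ, 0 < C ∧ ∀ (d m : ℕ), 1 ≤ d → 1 ≤ m →
      ∀ (Ω : Type) [MeasurableSpace Ω] (P : Measure Ω), IsProbabilityMeasure P →
      ∀ h : ℝ, 0 < h → h ≤ 1 →
      ∀ (ξ : Ω → EuclideanSpace ℝ (Fin m)), Measurable ξ →
        eLpNorm ξ (ENNReal.ofReal (2 * q)) P ≤ ENNReal.ofReal (κ * h ^ ((1 : ℝ) / 2)) →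
      ∀ (f : EuclideanSpace ℝ (Fin d) → EuclideanSpace ℝ (Fin d))
        (g : EuclideanSpace ℝ (Fin d) → EuclideanSpace ℝ (Fin d × Fin m)),
      (∀ x, ‖f x‖ ≤ L * (1 + ‖x‖ ^ (2 * r + 1))) →
      (∀ x, ‖g x‖ ≤ L * (1 + ‖x‖ ^ ρ)) →
      ∀ x : EuclideanSpace ℝ (Fin d),
        eLpNorm (fun ω =>
            (1 + h * ‖f x‖ + ‖matMulVec (g x) (ξ ω)‖)⁻¹ • f x - f x)
            (ENNReal.ofReal (2 * q)) P
          ≤ ENNReal.ofReal (C * h ^ ((1 : ℝ) / 2) * (1 + ‖x‖ ^ (4 * r + 2))) ∧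
        eLpNorm (fun ω =>
            (1 + h * ‖f x‖ + ‖matMulVec (g x) (ξ ω)‖)⁻¹ • g x - g x)
            (ENNReal.ofReal (2 * q)) P
          ≤ ENNReal.ofReal (C * h ^ ((1 : ℝ) / 2) * (1 + ‖x‖ ^ (2 * r + ρ + 1))) :=
  bts_modification_error_general L r ρ q κ hL hρ0 hρr hq hκ
end

section
/- Let d ≥ 1 and let f : ℝ^d → ℝ^d be continuous and satisfy the one-sided Lipschitz condition ⟨x−y, f(x)−f(y)⟩ ≤ C|x−y|² for all x, y ∈ ℝ^d, for some C ∈ ℝ. Let h > 0 with hC < 1. Then for every z ∈ ℝ^d there exists a unique y ∈ ℝ^d such that y = z + h f(y); equivalently, the map x ↦ x − h f(x) is a bijection from ℝ^d onto ℝ^d. -/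
/-!
Write `G x = x - h • f x`. The one-sided Lipschitz bound makes `G` strongly monotone with modulus
`m = 1 - hC > 0`, i.e. `m ‖x - y‖² ≤ ⟪x - y, G x - G y⟫`; hence `m ‖x - y‖ ≤ ‖G x - G y‖`, so `G` is
injective with closed range. For smooth `f` the derivative of `G` is strongly monotone as well,
hence invertible, and the inverse function theorem makes the range open, so `G` is onto. A merely
continuous `f` is approximated uniformly on compact sets by mollifications `φ ⋆ f`, which keep the
one-sided Lipschitz constant; the solutions of the mollified equations `y - h (φ ⋆ f) y = z` stay in
a fixed ball, so `z` lies in the closure of the range of `G`.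
-/

open scoped RealInnerProductSpace Convolution
open Function Metric Set Filter Topology MeasureTheory ContinuousLinearMap

section

variable {E : Type*} [NormedAddCommGroup E] [InnerProductSpace ℝ E]

def OneSidedLipschitzWith (C : ℝ) (f : E → E) : Prop :=
  ∀ x y, ⟪x - y, f x - f y⟫ ≤ C * ‖x - y‖ ^ 2

def StronglyMonotoneWith (m : ℝ) (F : E → E) : Prop :=
  ∀ x y, m * ‖x - y‖ ^ 2 ≤ ⟪x - y, F x - F y⟫

theorem OneSidedLipschitzWith.stronglyMonotoneWith_sub_smul {C h : ℝ} {f : E → E}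
    (hf : OneSidedLipschitzWith C f) (hh : 0 ≤ h) :
    StronglyMonotoneWith (1 - h * C) (fun x => x - h • f x) := by
  intro x y
  have hxy : (x - h • f x) - (y - h • f y) = (x - y) - h • (f x - f y) := by
    rw [smul_sub]
    abel
  rw [hxy, inner_sub_right, real_inner_smul_right, real_inner_self_eq_norm_sq]
  nlinarith [mul_le_mul_of_nonneg_left (hf x y) hh]

namespace StronglyMonotoneWith

variable {m : ℝ} {F : E → E}

theorem mul_norm_sub_le (hF : StronglyMonotoneWith m F) (x y : E) :
    m * ‖x - y‖ ≤ ‖F x - F y‖ := by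
  rcases (norm_nonneg (x - y)).eq_or_lt with hxy | hxy
  · simp [← hxy]
  · refine le_of_mul_le_mul_right ?_ hxy
    calc m * ‖x - y‖ * ‖x - y‖ = m * ‖x - y‖ ^ 2 := by ring
      _ ≤ ⟪x - y, F x - F y⟫ := hF x y
      _ ≤ ‖x - y‖ * ‖F x - F y‖ := real_inner_le_norm _ _
      _ = ‖F x - F y‖ * ‖x - y‖ := mul_comm _ _

theorem injective (hF : StronglyMonotoneWith m F) (hm : 0 < m) : Injective F := by
  intro x y hxy
  have := hF.mul_norm_sub_le x y
  rw [hxy, sub_self, norm_zero] at this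
  exact sub_eq_zero.1 (norm_le_zero_iff.1 (nonpos_of_mul_nonpos_right this hm))

theorem isClosed_range [CompleteSpace E] (hF : StronglyMonotoneWith m F) (hm : 0 < m)
    (hFc : Continuous F) : IsClosed (range F) := by
  refine IsSeqClosed.isClosed fun y z hy hyz => ?_
  choose x hx using hy
  obtain rfl : y = F ∘ x := funext fun n => (hx n).symm
  have hx : CauchySeq x := by
    refine Metric.cauchySeq_iff'.2 fun ε hε => ?_
    obtain ⟨N, hN⟩ := Metric.cauchySeq_iff'.1 hyz.cauchySeq (m * ε) (mul_pos hm hε)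
    refine ⟨N, fun n hn => lt_of_mul_lt_mul_left ?_ hm.le⟩
    rw [dist_eq_norm]
    exact (hF.mul_norm_sub_le _ _).trans_lt
      (by simpa only [dist_eq_norm, comp_apply] using hN n hn)
  obtain ⟨a, ha⟩ := cauchySeq_tendsto_of_complete hx
  exact ⟨a, tendsto_nhds_unique ((hFc.tendsto a).comp ha) hyz⟩

theorem mul_norm_sq_le_inner_of_hasFDerivAt (hF : StronglyMonotoneWith m F) {D : E →L[ℝ] E}
    {x : E} (hD : HasFDerivAt F D x) (v : E) : m * ‖v‖ ^ 2 ≤ ⟪v, D v⟫ := by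
  have hline : HasDerivAt (fun t : ℝ => F (x + t • v)) (D v) 0 := by
    have hx : HasDerivAt (fun t : ℝ => x + t • v) v 0 := by
      simpa using ((hasDerivAt_id (0 : ℝ)).smul_const v).const_add x
    exact (hD.comp_hasDerivAt_of_eq (0 : ℝ) hx (by simp))
  have hslope := (tendsto_const_nhds (x := v)).inner (𝕜 := ℝ) hline.tendsto_slope_zero_right
  refine ge_of_tendsto (x := 𝓝[>] (0 : ℝ)) hslope ?_
  filter_upwards [self_mem_nhdsWithin] with t (ht : 0 < t)
  have := hF (x + t • v) x
  simp only [zero_add, zero_smul, add_zero, add_sub_cancel_left, norm_smul, real_inner_smul_left,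
    Real.norm_eq_abs, abs_of_pos ht] at this ⊢
  rw [real_inner_smul_right, le_inv_mul_iff₀ ht]
  nlinarith

variable [FiniteDimensional ℝ E]

theorem isOpen_range_of_contDiff (hF : StronglyMonotoneWith m F) (hm : 0 < m)
    (hFd : ContDiff ℝ 1 F) : IsOpen (range F) := by
  refine isOpen_iff_mem_nhds.2 ?_
  rintro _ ⟨x, rfl⟩
  set D := fderiv ℝ F x
  have hD : HasStrictFDerivAt F D x := hFd.contDiffAt.hasStrictFDerivAt one_ne_zero
  have hDinj : Injective D := by
    refine (injective_iff_map_eq_zero D).2 fun v hv => ?_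
    have := hF.mul_norm_sq_le_inner_of_hasFDerivAt hD.hasFDerivAt v
    rw [hv, inner_zero_right] at this
    exact norm_eq_zero.1 (pow_eq_zero_iff two_ne_zero |>.1
      (le_antisymm (nonpos_of_mul_nonpos_right this hm) (sq_nonneg _)))
  have hDsurj : LinearMap.range (D : E →ₗ[ℝ] E) = ⊤ :=
    LinearMap.range_eq_top.2 (LinearMap.injective_iff_surjective.1 hDinj)
  rw [← hD.map_nhds_eq_of_surj hDsurj]
  exact mem_map.2 (univ_mem' mem_range_self)

theorem surjective_of_contDiff (hF : StronglyMonotoneWith m F) (hm : 0 < m)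
    (hFd : ContDiff ℝ 1 F) : Surjective F :=
  range_eq_univ.1 <| IsClopen.eq_univ
    ⟨hF.isClosed_range hm hFd.continuous, hF.isOpen_range_of_contDiff hm hFd⟩ (range_nonempty F)

theorem surjective_of_forall_isCompact_approx (hF : StronglyMonotoneWith m F) (hm : 0 < m)
    (hFc : Continuous F)
    (happrox : ∀ K : Set E, IsCompact K → ∀ ε > 0, ∃ G : E → E,
      ContDiff ℝ 1 G ∧ StronglyMonotoneWith m G ∧ ∀ x ∈ K, dist (G x) (F x) < ε) :
    Surjective F := by
  intro z
  rw [← mem_range, ← (hF.isClosed_range hm hFc).closure_eq, Metric.mem_closure_iff]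
  intro ε hε
  set R := (‖z‖ + ‖F 0‖ + 1) / m
  obtain ⟨G, hGd, hG, hGF⟩ := happrox (closedBall 0 R) (isCompact_closedBall 0 R) (min ε 1)
    (lt_min hε one_pos)
  obtain ⟨y, rfl⟩ := hG.surjective_of_contDiff hm hGd z
  -- the a priori bound `m ‖y‖ ≤ ‖G y - G 0‖` confines `y` to the ball where `G ≈ F`
  have hy : y ∈ closedBall (0 : E) R := by
    have hG0 : ‖G 0‖ ≤ ‖F 0‖ + 1 := by
      have := (hGF 0 (mem_closedBall_self (by positivity))).trans_le (min_le_right _ _)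
      rw [dist_eq_norm] at this
      linarith [norm_sub_norm_le (G 0) (F 0)]
    rw [mem_closedBall_zero_iff, le_div_iff₀ hm, mul_comm]
    have := hG.mul_norm_sub_le y 0
    rw [sub_zero] at this
    linarith [norm_sub_le (G y) (G 0)]
  exact ⟨F y, mem_range_self y, (hGF y hy).trans_le (min_le_left _ _)⟩

end StronglyMonotoneWith

section Mollification

variable [FiniteDimensional ℝ E] [MeasurableSpace E] [BorelSpace E] (μ : Measure E)
  [μ.IsAddHaarMeasure]

theorem Continuous.exists_contDiffBump_dist_convolution_lt {E' : Type*} [NormedAddCommGroup E']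
    [NormedSpace ℝ E'] [CompleteSpace E'] {f : E → E'} (hf : Continuous f) {K : Set E}
    (hK : IsCompact K) {ε : ℝ} (hε : 0 < ε) :
    ∃ φ : ContDiffBump (0 : E), ∀ x ∈ K, dist ((φ.normed μ ⋆[lsmul ℝ ℝ, μ] f) x) (f x) < ε := by
  obtain ⟨δ, hδ, hfδ⟩ := Metric.uniformContinuousOn_iff.1
    ((hK.cthickening (r := 1)).uniformContinuousOn_of_continuous hf.continuousOn) (ε / 2)
    (half_pos hε)
  set r := min 1 δ
  have hr : 0 < r := lt_min one_pos hδ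
  refine ⟨⟨r / 2, r, half_pos hr, half_lt_self hr⟩, fun x hx => ?_⟩
  refine lt_of_le_of_lt (ContDiffBump.dist_normed_convolution_le hf.aestronglyMeasurable
    fun y hy => ?_) (half_lt_self hε)
  rw [mem_ball, lt_min_iff] at hy
  exact (hfδ _ (mem_cthickening_of_dist_le _ x _ _ hx hy.1.le) _
    (self_subset_cthickening _ hx) hy.2).le

theorem OneSidedLipschitzWith.convolution {C : ℝ} {f : E → E} (hf : OneSidedLipschitzWith C f)
    (hfc : Continuous f) (φ : ContDiffBump (0 : E)) :
    OneSidedLipschitzWith C (φ.normed μ ⋆[lsmul ℝ ℝ, μ] f) := by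
  intro x y
  have hconv := φ.hasCompactSupport_normed.convolutionExists_left (lsmul ℝ ℝ)
    (φ.continuous_normed (μ := μ)) (hfc.locallyIntegrable (μ := μ))
  have hx : Integrable (fun t => φ.normed μ t • f (x - t)) μ := (hconv x).integrable
  have hy : Integrable (fun t => φ.normed μ t • f (y - t)) μ := (hconv y).integrable
  have hint : Integrable (fun t => φ.normed μ t • f (x - t) - φ.normed μ t • f (y - t)) μ :=
    hx.sub hy
  have hint' : Integrable (fun t => φ.normed μ t * ⟪x - y, f (x - t) - f (y - t)⟫) μ := by
    simpa only [← smul_sub, real_inner_smul_right] using hint.const_inner (𝕜 := ℝ) (x - y)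
  calc ⟪x - y, (φ.normed μ ⋆[lsmul ℝ ℝ, μ] f) x - (φ.normed μ ⋆[lsmul ℝ ℝ, μ] f) y⟫
      = ∫ t, φ.normed μ t * ⟪x - y, f (x - t) - f (y - t)⟫ ∂μ := by
        simp only [convolution_def, lsmul_apply]
        rw [← integral_sub hx hy, ← integral_inner hint]
        simp only [← smul_sub, real_inner_smul_right]
    _ ≤ ∫ t, φ.normed μ t * (C * ‖x - y‖ ^ 2) ∂μ := by
        refine integral_mono hint' (φ.integrable_normed.mul_const _) fun t => ?_
        refine mul_le_mul_of_nonneg_left ?_ (φ.nonneg_normed t)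
        simpa only [sub_sub_sub_cancel_right] using hf (x - t) (y - t)
    _ = C * ‖x - y‖ ^ 2 := by rw [integral_mul_const, φ.integral_normed, one_mul]

end Mollification

theorem OneSidedLipschitzWith.surjective_sub_smul [FiniteDimensional ℝ E] {C h : ℝ} {f : E → E}
    (hf : OneSidedLipschitzWith C f) (hfc : Continuous f) (hh : 0 ≤ h) (hhC : h * C < 1) :
    Surjective (fun x => x - h • f x) := by
  borelize E
  refine (hf.stronglyMonotoneWith_sub_smul hh).surjective_of_forall_isCompact_approx
    (sub_pos.2 hhC) (by fun_prop) fun K hK ε hε => ?_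
  obtain ⟨φ, hφ⟩ := hfc.exists_contDiffBump_dist_convolution_lt Measure.addHaar hK
    (div_pos hε (by positivity : 0 < h + 1))
  refine ⟨fun x => x - h • (φ.normed .addHaar ⋆[lsmul ℝ ℝ, .addHaar] f) x, ?_,
    (hf.convolution _ hfc φ).stronglyMonotoneWith_sub_smul hh, fun x hx => ?_⟩
  · exact contDiff_id.sub <| (φ.hasCompactSupport_normed.contDiff_convolution_left (lsmul ℝ ℝ)
      φ.contDiff_normed hfc.locallyIntegrable).const_smul h
  · rw [dist_sub_left, dist_smul₀, Real.norm_of_nonneg hh]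
    calc h * dist _ (f x) ≤ h * (ε / (h + 1)) := mul_le_mul_of_nonneg_left (hφ x hx).le hh
      _ < ε := by rw [mul_div_assoc', div_lt_iff₀ (by positivity)]; nlinarith

end

theorem backward_euler_step_wellposed_general
    (d : ℕ)
    (f : EuclideanSpace ℝ (Fin d) → EuclideanSpace ℝ (Fin d))
    (hf : Continuous f) (C : ℝ)
    (hmono : ∀ x y : EuclideanSpace ℝ (Fin d), ⟪x - y, f x - f y⟫ ≤ C * ‖x - y‖ ^ 2)
    (h : ℝ) (hh : 0 < h) (hhC : h * C < 1) :
    (∀ z : EuclideanSpace ℝ (Fin d), ∃! y : EuclideanSpace ℝ (Fin d), y = z + h • f y) ∧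
    Function.Bijective (fun x : EuclideanSpace ℝ (Fin d) => x - h • f x) := by
  have hbij : Bijective (fun x : EuclideanSpace ℝ (Fin d) => x - h • f x) :=
    ⟨(OneSidedLipschitzWith.stronglyMonotoneWith_sub_smul hmono hh.le).injective (sub_pos.2 hhC),
      OneSidedLipschitzWith.surjective_sub_smul hmono hf hh.le hhC⟩
  exact ⟨fun z => by simpa only [sub_eq_iff_eq_add] using hbij.existsUnique z, hbij⟩

/-- Well-posedness of each implicit step of the backward Euler method: if `f` is
continuous and one-sided Lipschitz with constant `C`, and `hC < 1`, then for every
`z` the implicit equation `y = z + h f(y)` has a unique solution; equivalently,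
`x ↦ x − h f(x)` is a bijection of `ℝ^d`. -/
theorem backward_euler_step_wellposed
    (d : ℕ) (hd : 1 ≤ d)
    (f : EuclideanSpace ℝ (Fin d) → EuclideanSpace ℝ (Fin d))
    (hf : Continuous f) (C : ℝ)
    (hmono : ∀ x y : EuclideanSpace ℝ (Fin d), ⟪x - y, f x - f y⟫ ≤ C * ‖x - y‖ ^ 2)
    (h : ℝ) (hh : 0 < h) (hhC : h * C < 1) :
    (∀ z : EuclideanSpace ℝ (Fin d), ∃! y : EuclideanSpace ℝ (Fin d), y = z + h • f y) ∧
    Function.Bijective (fun x : EuclideanSpace ℝ (Fin d) => x - h • f x) :=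
  backward_euler_step_wellposed_general d f hf C hmono h hh hhC
end
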